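/- For every integer m ≥ 2, let H_m be the graph obtained from a complete graph K on m − 1 vertices and m pairwise disjoint triangles by joining every vertex of each triangle to every vertex of K. Then the variant isolated toughness of H_m equals I′(H_m) = (3m − 1)/(m − 1). In particular I′(H_2) = 5, I′(H_3) = 4, I′(H_4) = 11/3 and I′(H_5) = 7/2. -/

import Mathlib

open SimpleGraph

variable {V : Type*}

/-- The number of connected components of `G - S`, the subgraph of `G`
induced on the complement of the vertex set `S`. -/
noncomputable def compCount (G : SimpleGraph V) (S : Set V) : ℕ :=
  Nat.card (G.induce (Sᶜ : Set V)).ConnectedComponent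

/-- The number of isolated vertices of `G - S`, the subgraph of `G`
induced on the complement of the vertex set `S`. -/
noncomputable def isoCount (G : SimpleGraph V) (S : Set V) : ℕ :=
  {v : V | v ∉ S ∧ ∀ w : V, G.Adj v w → w ∈ S}.ncard

/-- The neighbourhood `N_G(Y)` of a set of vertices `Y`. -/
def nbhd (G : SimpleGraph V) (Y : Set V) : Set V := {v : V | ∃ y ∈ Y, G.Adj y v}

/-- `G` has a spanning subgraph each of whose connected components is
isomorphic to `K₂` or to an odd cycle `C_{2i+1}` with `i ≥ 2`. -/
def HasK2OddCycleFactor (G : SimpleGraph V) : Prop :=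
  ∃ F : SimpleGraph V, F ≤ G ∧ ∀ c : F.ConnectedComponent,
    Nonempty (F.induce c.supp ≃g (⊤ : SimpleGraph (Fin 2))) ∨
    ∃ i : ℕ, 2 ≤ i ∧ Nonempty (F.induce c.supp ≃g cycleGraph (2 * i + 1))

/-- The toughness `t(G)`: the minimum of `|S| / c(G - S)` over vertex sets `S`
with `c(G - S) ≥ 2`. -/
noncomputable def toughness (G : SimpleGraph V) : ℝ :=
  sInf {x : ℝ | ∃ S : Set V, 2 ≤ compCount G S ∧ x = (S.ncard : ℝ) / (compCount G S : ℝ)}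

/-- The isolated toughness `I(G)`: the minimum of `|S| / iso(G - S)` over vertex
sets `S` with `iso(G - S) ≥ 2`. -/
noncomputable def isoToughness (G : SimpleGraph V) : ℝ :=
  sInf {x : ℝ | ∃ S : Set V, 2 ≤ isoCount G S ∧ x = (S.ncard : ℝ) / (isoCount G S : ℝ)}

/-- The variant isolated toughness `I'(G)`: the minimum of `|S| / (iso(G - S) - 1)`
over vertex sets `S` with `iso(G - S) ≥ 2`. -/
noncomputable def isoToughness' (G : SimpleGraph V) : ℝ :=
  sInf {x : ℝ | ∃ S : Set V, 2 ≤ isoCount G S ∧ x = (S.ncard : ℝ) / ((isoCount G S : ℝ) - 1)}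

/-- The binding number `bind(G)`: the minimum of `|N_G(Y)| / |Y|` over nonempty
vertex sets `Y` with `N_G(Y) ≠ V(G)`. -/
noncomputable def bindingNumber (G : SimpleGraph V) : ℝ :=
  sInf {x : ℝ | ∃ Y : Set V, Y.Nonempty ∧ nbhd G Y ≠ Set.univ ∧
    x = ((nbhd G Y).ncard : ℝ) / (Y.ncard : ℝ)}

/-- `G_m`: the complete graph on `m - 1` vertices together with `m` independent
vertices each joined to every vertex of the complete graph. -/
def Gm (m : ℕ) : SimpleGraph (Fin (m - 1) ⊕ Fin m) where
  Adj x y := x ≠ y ∧ ¬(x.isRight ∧ y.isRight)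
  symm := ⟨fun x y ⟨h1, h2⟩ => ⟨h1.symm, fun ⟨a, b⟩ => h2 ⟨b, a⟩⟩⟩
  loopless := ⟨fun x ⟨h, _⟩ => h rfl⟩

/-- `H_m`: the complete graph on `m - 1` vertices together with `m` pairwise
disjoint triangles, every vertex of each triangle joined to every vertex of the
complete graph. -/
def Hm (m : ℕ) : SimpleGraph (Fin (m - 1) ⊕ (Fin m × Fin 3)) where
  Adj x y := x ≠ y ∧ ∀ p q : Fin m × Fin 3, x = Sum.inr p → y = Sum.inr q → p.1 = q.1
  symm := ⟨fun x y ⟨h1, h2⟩ => ⟨h1.symm, fun p q hp hq => (h2 q p hq hp).symm⟩⟩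
  loopless := ⟨fun x ⟨h, _⟩ => h rfl⟩

/-- `B` is a connected set of vertices of `G` with no cut vertex of the induced graph. -/
def NoCutConn (G : SimpleGraph V) (B : Set V) : Prop :=
  (G.induce B).Connected ∧ ∀ v ∈ B, B = {v} ∨ (G.induce (B \ {v})).Connected

/-- `B` is (the vertex set of) a block of `G`: a maximal connected subgraph
without a cut vertex. -/
def IsBlock (G : SimpleGraph V) (B : Set V) : Prop :=
  NoCutConn G B ∧ ∀ C : Set V, B ⊆ C → NoCutConn G C → B = C

/-- A triangular-cactus: a connected graph each of whose blocks is a triangle. -/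
def IsTriangularCactus (G : SimpleGraph V) : Prop :=
  G.Connected ∧ ∀ B : Set V, IsBlock G B → Nonempty (G.induce B ≃g (⊤ : SimpleGraph (Fin 3)))

/-! The isolated vertices of `G - S` form an independent set `I` with `N(I) ⊆ S`. In `H_m` an
independent set of size `k ≥ 2` consists of vertices of `k` distinct triangles, and its neighbourhood
contains the clique and the other two vertices of each of these triangles, so
`|S| ≥ m - 1 + 2k` with `k ≤ m`, whence `|S| / (k - 1) ≥ 2 + (m + 1) / (k - 1) ≥ (3m - 1) / (m - 1)`.
Equality is attained by deleting everything except one vertex of each triangle. -/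

def isoSet (G : SimpleGraph V) (S : Set V) : Set V :=
  {v | v ∉ S ∧ ∀ w, G.Adj v w → w ∈ S}

theorem isoCount_eq_ncard_isoSet (G : SimpleGraph V) (S : Set V) :
    isoCount G S = (isoSet G S).ncard := rfl

theorem isIndepSet_isoSet (G : SimpleGraph V) (S : Set V) : G.IsIndepSet (isoSet G S) :=
  fun _ hu _ hv _ hadj => hv.1 (hu.2 _ hadj)

theorem nbhd_isoSet_subset (G : SimpleGraph V) (S : Set V) : nbhd G (isoSet G S) ⊆ S :=
  fun _ ⟨_, hu, hadj⟩ => hu.2 _ hadj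

theorem isoSet_compl_of_isIndepSet {G : SimpleGraph V} {T : Set V} (hT : G.IsIndepSet T) :
    isoSet G Tᶜ = T := by
  ext v
  simp only [isoSet, Set.mem_ofPred_eq, Set.mem_compl_iff, not_not]
  exact ⟨And.left, fun hv => ⟨hv, fun _ hadj hw => hT hv hw hadj.ne hadj⟩⟩

section Hm

variable {m : ℕ}

@[simp]
theorem Hm_adj_inl_left {a : Fin (m - 1)} {w : Fin (m - 1) ⊕ (Fin m × Fin 3)} :
    (Hm m).Adj (Sum.inl a) w ↔ Sum.inl a ≠ w := by
  simp [Hm]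

@[simp]
theorem Hm_adj_inr_inl {p : Fin m × Fin 3} {a : Fin (m - 1)} :
    (Hm m).Adj (Sum.inr p) (Sum.inl a) := by
  simp [Hm]

@[simp]
theorem Hm_adj_inr_inr {p q : Fin m × Fin 3} :
    (Hm m).Adj (Sum.inr p) (Sum.inr q) ↔ p ≠ q ∧ p.1 = q.1 := by
  simp only [Hm, ne_eq, Sum.inr.injEq]
  exact and_congr_right fun _ => ⟨fun h => h p q rfl rfl, by rintro h _ _ rfl rfl; exact h⟩

theorem Hm_isIndepSet_eq_image {s : Set (Fin (m - 1) ⊕ (Fin m × Fin 3))}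
    (hs : (Hm m).IsIndepSet s) (h2 : 2 ≤ s.ncard) :
    ∃ P : Set (Fin m × Fin 3), s = Sum.inr '' P ∧ P.InjOn Prod.fst := by
  have hsub : s ⊆ Set.range Sum.inr := by
    rintro (a | p) ha
    · obtain ⟨w, hw, hne⟩ := Set.exists_ne_of_one_lt_ncard h2 (Sum.inl a)
      exact absurd (Hm_adj_inl_left.2 hne.symm) (hs ha hw hne.symm)
    · exact ⟨p, rfl⟩
  refine ⟨Sum.inr ⁻¹' s, (Set.image_preimage_eq_of_subset hsub).symm, fun p hp q hq hpq => ?_⟩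
  by_contra hne
  exact hs hp hq (Sum.inr_injective.ne hne) (Hm_adj_inr_inr.2 ⟨hne, hpq⟩)

theorem Hm_ncard_nbhd_image_inr {P : Set (Fin m × Fin 3)} (hP : P.Nonempty)
    (hinj : P.InjOn Prod.fst) : m - 1 + 2 * P.ncard ≤ (nbhd (Hm m) (Sum.inr '' P)).ncard := by
  obtain ⟨p₀, hp₀⟩ := hP
  -- the clique, and the two triangle-mates `(p.1, p.2 + 1)`, `(p.1, p.2 + 2)` of each `p ∈ P`
  let f : Fin (m - 1) ⊕ (P × Fin 2) → Fin (m - 1) ⊕ (Fin m × Fin 3) :=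
    Sum.elim Sum.inl fun x => Sum.inr (x.1.1.1, x.1.1.2 + x.2.succ)
  have hf : Function.Injective f := by
    rintro (a | ⟨⟨p, hp⟩, b⟩) (a' | ⟨⟨q, hq⟩, b'⟩) h <;> simp only [f, Sum.elim_inl, Sum.elim_inr,
      Sum.inl.injEq, Sum.inr.injEq, reduceCtorEq, Prod.mk.injEq] at h
    · rw [h]
    · obtain rfl : p = q := hinj hp hq h.1
      obtain rfl : b = b' := Fin.succ_injective _ (add_left_cancel h.2)
      rfl
  have hrange : Set.range f ⊆ nbhd (Hm m) (Sum.inr '' P) := by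
    rintro _ ⟨a | ⟨⟨p, hp⟩, b⟩, rfl⟩
    · exact ⟨_, ⟨p₀, hp₀, rfl⟩, Hm_adj_inr_inl⟩
    · refine ⟨_, ⟨p, hp, rfl⟩, Hm_adj_inr_inr.2 ⟨fun h => ?_, rfl⟩⟩
      exact Fin.succ_ne_zero b (left_eq_add.1 (congrArg Prod.snd h))
  calc m - 1 + 2 * P.ncard = (Set.range f).ncard := by
        rw [Set.ncard_range_of_injective hf, Nat.card_sum, Nat.card_prod, Nat.card_coe_set_eq]
        simp [mul_comm]
    _ ≤ _ := Set.ncard_le_ncard hrange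

theorem Hm_isIndepSet_range_inr_zero :
    (Hm m).IsIndepSet (Set.range fun i : Fin m => Sum.inr (i, 0)) := by
  rintro _ ⟨i, rfl⟩ _ ⟨j, rfl⟩ hne hadj
  exact hne (congrArg (fun i => Sum.inr (i, 0)) (Hm_adj_inr_inr.1 hadj).2)

theorem Hm_isoCount_le_and_le_ncard {S : Set (Fin (m - 1) ⊕ (Fin m × Fin 3))}
    (hS : 2 ≤ isoCount (Hm m) S) :
    isoCount (Hm m) S ≤ m ∧ m - 1 + 2 * isoCount (Hm m) S ≤ S.ncard := by
  obtain ⟨P, hI, hP⟩ := Hm_isIndepSet_eq_image (isIndepSet_isoSet _ S) hS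
  have hk : isoCount (Hm m) S = P.ncard := by
    rw [isoCount_eq_ncard_isoSet, hI, Set.ncard_image_of_injective _ Sum.inr_injective]
  rw [hk] at hS ⊢
  refine ⟨by simpa using Set.ncard_le_ncard_of_injOn _ (fun _ _ => Set.mem_univ _) hP, ?_⟩
  calc m - 1 + 2 * P.ncard
      ≤ (nbhd (Hm m) (Sum.inr '' P)).ncard :=
        Hm_ncard_nbhd_image_inr (Set.nonempty_of_ncard_ne_zero (by omega)) hP
    _ ≤ S.ncard := Set.ncard_le_ncard (hI ▸ nbhd_isoSet_subset _ S)

theorem Hm_exists_isoCount_eq (hm : 1 ≤ m) :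
    ∃ S : Set (Fin (m - 1) ⊕ (Fin m × Fin 3)),
      isoCount (Hm m) S = m ∧ (S.ncard : ℝ) = 3 * m - 1 := by
  set T : Set (Fin (m - 1) ⊕ (Fin m × Fin 3)) := Set.range fun i : Fin m => Sum.inr (i, 0)
  have hT : T.ncard = m := by
    rw [Set.ncard_range_of_injective fun i j h => by simpa using h, Nat.card_fin]
  refine ⟨Tᶜ, ?_, ?_⟩
  · rw [isoCount_eq_ncard_isoSet, isoSet_compl_of_isIndepSet Hm_isIndepSet_range_inr_zero, hT]
  · have hcard := Set.ncard_add_ncard_compl T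
    rw [hT, Nat.card_sum, Nat.card_prod] at hcard
    simp only [Nat.card_eq_fintype_card, Fintype.card_fin] at hcard
    have hcardℝ := congrArg (Nat.cast : ℕ → ℝ) hcard
    push_cast [Nat.cast_sub hm] at hcardℝ
    linarith

end Hm

theorem three_mul_sub_one_div_le {m k s : ℝ} (hk : 2 ≤ k) (hkm : k ≤ m) (hs : m - 1 + 2 * k ≤ s) :
    (3 * m - 1) / (m - 1) ≤ s / (k - 1) := by
  rw [div_le_div_iff₀ (by linarith) (by linarith)]
  -- `(m - 1 + 2k)(m - 1) - (3m - 1)(k - 1) = (m - k)(m + 1)`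
  nlinarith [mul_nonneg (sub_nonneg.2 hkm) (by linarith : (0 : ℝ) ≤ m + 1)]

theorem stmt17 (m : ℕ) (hm : 2 ≤ m) :
    isoToughness' (Hm m) = (3 * (m : ℝ) - 1) / ((m : ℝ) - 1) := by
  obtain ⟨S₀, hiso₀, hcard₀⟩ := Hm_exists_isoCount_eq (m := m) (by omega)
  refine IsLeast.csInf_eq ⟨⟨S₀, by omega, by rw [hiso₀, hcard₀]⟩, ?_⟩
  rintro _ ⟨S, hS, rfl⟩
  obtain ⟨hkm, hcard⟩ := Hm_isoCount_le_and_le_ncard hS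
  refine three_mul_sub_one_div_le (by exact_mod_cast hS) (by exact_mod_cast hkm) ?_
  have hcardℝ := (Nat.cast_le (α := ℝ)).2 hcard
  push_cast [Nat.cast_sub (by omega : 1 ≤ m)] at hcardℝ
  exact hcardℝ
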